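/- Let R be a commutative ring and α, β ∈ R. In the cubic Hecke algebra H(Q,n) over R, for every j with 1 ≤ j ≤ n−2 one has the identity b_{j+1} b_j² b_{j+1}² = b_j² b_{j+1}² b_j + α·(b_{j+1} b_j² b_{j+1} − b_j b_{j+1}² b_j) + β·(b_{j+1} b_j² − b_{j+1}² b_j). -/

import Mathlib

def braidRels (m : ℕ) : Set (FreeGroup (Fin m)) :=
  { r | (∃ i j : Fin m, (i : ℕ) + 1 < (j : ℕ) ∧
          r = FreeGroup.of i * FreeGroup.of j * (FreeGroup.of i)⁻¹ * (FreeGroup.of j)⁻¹) ∨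
        (∃ i j : Fin m, (j : ℕ) = (i : ℕ) + 1 ∧
          r = FreeGroup.of i * FreeGroup.of j * FreeGroup.of i *
              (FreeGroup.of j * FreeGroup.of i * FreeGroup.of j)⁻¹) }

abbrev BraidGroup (n : ℕ) := PresentedGroup (braidRels (n - 1))

def braidGen (n : ℕ) (i : Fin (n - 1)) : BraidGroup n := PresentedGroup.of i

theorem braid_mk_eq_one {m : ℕ} {r : FreeGroup (Fin m)} (hr : r ∈ braidRels m) :
    PresentedGroup.mk (braidRels m) r = 1 :=
  (QuotientGroup.eq_one_iff r).mpr (Subgroup.subset_normalClosure hr)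

noncomputable def braidIncl (n : ℕ) : BraidGroup n →* BraidGroup (n + 1) :=
  PresentedGroup.toGroup
    (f := fun i => braidGen (n + 1) (Fin.castLE (by omega : n - 1 ≤ n + 1 - 1) i))
    (by
      rintro r (⟨i, j, hij, rfl⟩ | ⟨i, j, hij, rfl⟩)
      · have h1 := braid_mk_eq_one (m := n + 1 - 1)
          (Or.inl ⟨Fin.castLE (by omega) i, Fin.castLE (by omega) j, by simpa using hij, rfl⟩)
        simp only [map_mul, map_inv, FreeGroup.lift_apply_of] at h1 ⊢
        exact h1
      · have h1 := braid_mk_eq_one (m := n + 1 - 1)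
          (Or.inr ⟨Fin.castLE (by omega) i, Fin.castLE (by omega) j, by simpa using hij, rfl⟩)
        simp only [map_mul, map_inv, FreeGroup.lift_apply_of] at h1 ⊢
        exact h1)

theorem braidIncl_gen (n : ℕ) (i : Fin (n - 1)) :
    braidIncl n (braidGen n i) = braidGen (n + 1) (Fin.castLE (by omega) i) :=
  PresentedGroup.toGroup.of _

variable (R : Type) [CommRing R]

noncomputable def gb (n : ℕ) (i : Fin (n - 1)) : MonoidAlgebra R (BraidGroup n) :=
  MonoidAlgebra.of R (BraidGroup n) (braidGen n i)

inductive cubicRel (α β : R) (n : ℕ) :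
    MonoidAlgebra R (BraidGroup n) → MonoidAlgebra R (BraidGroup n) → Prop
  | cube (i : Fin (n - 1)) :
      cubicRel α β n (gb R n i ^ 3) (α • gb R n i ^ 2 + β • gb R n i + 1)

abbrev CubicHecke (α β : R) (n : ℕ) := RingQuot (cubicRel R α β n)

noncomputable def hb (α β : R) (n : ℕ) (i : Fin (n - 1)) : CubicHecke R α β n :=
  RingQuot.mkAlgHom R (cubicRel R α β n) (gb R n i)

theorem mapDomain_gb (n : ℕ) (i : Fin (n - 1)) :
    (MonoidAlgebra.mapDomainAlgHom R R (braidIncl n)) (gb R n i)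
      = gb R (n + 1) (Fin.castLE (by omega) i) := by
  simp only [gb, MonoidAlgebra.mapDomainAlgHom_apply, MonoidAlgebra.of_apply,
    MonoidAlgebra.mapDomain_single, braidIncl_gen]

noncomputable def heckeIncl (α β : R) (n : ℕ) :
    CubicHecke R α β n →ₐ[R] CubicHecke R α β (n + 1) :=
  RingQuot.liftAlgHom R
    ⟨(RingQuot.mkAlgHom R (cubicRel R α β (n + 1))).comp
        (MonoidAlgebra.mapDomainAlgHom R R (braidIncl n)),
      by
        rintro x y ⟨i⟩
        have h2 : (MonoidAlgebra.mapDomainAlgHom R R (braidIncl n)) (gb R n i ^ 3)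
            = gb R (n + 1) (Fin.castLE (by omega) i) ^ 3 := by
          rw [map_pow, mapDomain_gb]
        have h3 : (MonoidAlgebra.mapDomainAlgHom R R (braidIncl n))
              (α • gb R n i ^ 2 + β • gb R n i + 1)
            = α • gb R (n + 1) (Fin.castLE (by omega) i) ^ 2
              + β • gb R (n + 1) (Fin.castLE (by omega) i) + 1 := by
          rw [map_add, map_add, map_smul, map_smul, map_pow, map_one, mapDomain_gb]
        simp only [AlgHom.comp_apply, h2, h3]
        exact RingQuot.mkAlgHom_rel R (cubicRel.cube _)⟩

theorem heckeIncl_gen (α β : R) (n : ℕ) (i : Fin (n - 1)) :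
    heckeIncl R α β n (hb R α β n i) = hb R α β (n + 1) (Fin.castLE (by omega) i) := by
  simp only [heckeIncl, hb, RingQuot.liftAlgHom_mkAlgHom_apply, AlgHom.comp_apply, mapDomain_gb]

noncomputable def R0elt {A : Type*} [Ring A] [Algebra R A] (α β : R) (x y : A) : A :=
  y * x ^ 2 * y
  + (β ^ 2 - α) • (x ^ 2 * y ^ 2 * x ^ 2)
  + (α ^ 2 - α * β ^ 2 - β) • (x * y ^ 2 * x ^ 2 + x ^ 2 * y ^ 2 * x)
  + (α ^ 2 - α * β ^ 2) • (x ^ 2 * y * x ^ 2)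
  + (1 + 2 * α * β + α ^ 2 * β ^ 2 - α ^ 3) • (x * y ^ 2 * x)
  + (1 + α * β + α ^ 2 * β ^ 2 - α ^ 3) • (x * y * x ^ 2 + x ^ 2 * y * x)
  + (1 + 2 * α * β - β ^ 3) • (y ^ 2 * x ^ 2 + x ^ 2 * y ^ 2)
  + (α * β ^ 3 - 2 * α - 2 * α ^ 2 * β) • (y * x ^ 2 + x ^ 2 * y)
  + (α * β ^ 3 - 2 * α - 2 * α ^ 2 * β + β ^ 2) • (y ^ 2 * x + x * y ^ 2)
  + (α ^ 4 - α ^ 3 * β ^ 2 - 2 * α ^ 2 * β - 3 * α) • (x * y * x)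
  + (2 * α ^ 3 * β + 3 * α ^ 2 - α ^ 2 * β ^ 3 - α * β ^ 2) • (y * x + x * y)
  + (β ^ 4 - 2 * β - 3 * α * β ^ 2 + α ^ 2) • (x ^ 2 + y ^ 2)
  + (1 + 4 * α * β + 3 * α ^ 2 * β ^ 2 - α ^ 3 - α * β ^ 4 - β ^ 3) • x
  + (1 + 3 * α * β + 3 * α ^ 2 * β ^ 2 - α ^ 3 - α * β ^ 4) • y
  + algebraMap R A (3 * β ^ 2 - β ^ 5 - 2 * α - 3 * α ^ 2 * β + 4 * α * β ^ 3)

theorem map_R0elt {A B : Type*} [Ring A] [Ring B] [Algebra R A] [Algebra R B]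
    (f : A →ₐ[R] B) (α β : R) (x y : A) :
    f (R0elt R α β x y) = R0elt R α β (f x) (f y) := by
  simp only [R0elt, map_add, map_mul, map_pow, map_smul, AlgHom.commutes]

inductive KRel (α β : R) (n : ℕ) : CubicHecke R α β n → CubicHecke R α β n → Prop
  | r0 (j : Fin (n - 1)) (h : (j : ℕ) + 1 < n - 1) :
      KRel α β n (R0elt R α β (hb R α β n j) (hb R α β n ⟨(j : ℕ) + 1, h⟩)) 0

abbrev KAlg (α β : R) (n : ℕ) := RingQuot (KRel R α β n)

noncomputable def towerIncl (α β : R) (n : ℕ) :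
    KAlg R α β n →ₐ[R] KAlg R α β (n + 1) :=
  RingQuot.liftAlgHom R
    ⟨(RingQuot.mkAlgHom R (KRel R α β (n + 1))).comp (heckeIncl R α β n),
      by
        rintro x y ⟨j, h⟩
        have hle : n - 1 ≤ n + 1 - 1 := by omega
        have hlt : ((Fin.castLE hle j : Fin (n + 1 - 1)) : ℕ) + 1 < n + 1 - 1 := by
          simp only [Fin.coe_castLE]; omega
        have e3 : Fin.castLE hle ⟨(j : ℕ) + 1, h⟩
            = (⟨((Fin.castLE hle j : Fin (n + 1 - 1)) : ℕ) + 1, hlt⟩ : Fin (n + 1 - 1)) := by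
          ext; simp
        rw [AlgHom.comp_apply, AlgHom.comp_apply, map_R0elt R (heckeIncl R α β n),
          heckeIncl_gen, heckeIncl_gen, e3, map_zero (heckeIncl R α β n)]
        exact RingQuot.mkAlgHom_rel R (KRel.r0 (Fin.castLE hle j) hlt)⟩

/-- The class of the inverse `b_{i+1}⁻¹` in the cubic Hecke algebra. -/
noncomputable def hbInv (α β : R) (n : ℕ) (i : Fin (n - 1)) : CubicHecke R α β n :=
  RingQuot.mkAlgHom R (cubicRel R α β n)
    (MonoidAlgebra.of R (BraidGroup n) (braidGen n i)⁻¹)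

/-- The class of the generator `b_{i+1}` in `K_n(α,β)`. -/
noncomputable def kb (α β : R) (n : ℕ) (i : Fin (n - 1)) : KAlg R α β n :=
  RingQuot.mkAlgHom R (KRel R α β n) (hb R α β n i)

/-- The class of `b_{i+1}⁻¹` in `K_n(α,β)`. -/
noncomputable def kbInv (α β : R) (n : ℕ) (i : Fin (n - 1)) : KAlg R α β n :=
  RingQuot.mkAlgHom R (KRel R α β n) (hbInv R α β n i)

/-- The iterated tower map `K_n(α,β) → K_{n+k}(α,β)`. -/
noncomputable def towerInclMany (α β : R) (n : ℕ) :
    (k : ℕ) → (KAlg R α β n →ₐ[R] KAlg R α β (n + k))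
  | 0 => AlgHom.id R _
  | k + 1 => (towerIncl R α β (n + k)).comp (towerInclMany α β n k)

/-- The class of the generator `b_n` in `K_{n+1}(α,β)` (for `n ≥ 1`). -/
noncomputable def lastGen (α β : R) (n : ℕ) (h : 1 ≤ n) : KAlg R α β (n + 1) :=
  kb R α β (n + 1) ⟨n - 1, by omega⟩

/-- The class of `b_n⁻¹` in `K_{n+1}(α,β)` (for `n ≥ 1`). -/
noncomputable def lastGenInv (α β : R) (n : ℕ) (h : 1 ≤ n) : KAlg R α β (n + 1) :=
  kbInv R α β (n + 1) ⟨n - 1, by omega⟩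

/-- An admissible functional with parameters `(z, z̄)` on the tower of the algebras
`K_n(α,β)`: a compatible family of `R`-linear functionals satisfying the Markov-type
conditions for the last generator and its inverse. -/
structure AdmissibleFunctional (α β z zbar : R) : Type _ where
  T : ∀ n : ℕ, KAlg R α β n →ₗ[R] R
  compat : ∀ (n : ℕ) (x : KAlg R α β n), T (n + 1) (towerIncl R α β n x) = T n x
  cond_z : ∀ (n : ℕ) (h : 1 ≤ n) (x y : KAlg R α β n),
      T (n + 1) (towerIncl R α β n x * lastGen R α β n h * towerIncl R α β n y)
        = z * T n (x * y)
  cond_zbar : ∀ (n : ℕ) (h : 1 ≤ n) (x y : KAlg R α β n),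
      T (n + 1) (towerIncl R α β n x * lastGenInv R α β n h * towerIncl R α β n y)
        = zbar * T n (x * y)

/-- A Markov trace is an admissible functional each of whose components is a trace. -/
def AdmissibleFunctional.IsMarkov {α β z zbar : R}
    (T : AdmissibleFunctional R α β z zbar) : Prop :=
  ∀ (n : ℕ) (a b : KAlg R α β n), T.T n (a * b) = T.T n (b * a)

/-- A normalized functional takes the value `1` on the unit of `K₁(α,β)`. -/
def AdmissibleFunctional.IsNormalized {α β z zbar : R}
    (T : AdmissibleFunctional R α β z zbar) : Prop :=
  T.T 1 1 = 1

/-! A cubic relation makes each generator invertible, with inverse `u² - αu - β`. In the braid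
group the relation `uvu = vuv` gives `v u² v⁻¹ = u⁻¹ v² u`; writing `v² = v⁻¹ + αv + β` and
`u⁻¹ = u² - αu - β` turns this conjugation identity into the stated one. -/

theorem conj_sq_eq_of_braid {G : Type*} [Group G] {u v : G} (h : u * v * u = v * u * v) :
    v * u ^ 2 * v⁻¹ = u⁻¹ * v ^ 2 * u := by
  have hconj : v * u * v⁻¹ = u⁻¹ * v * u⁻¹⁻¹ :=
    calc v * u * v⁻¹ = u⁻¹ * (u * v * u) * v⁻¹ := by group
      _ = u⁻¹ * (v * u * v) * v⁻¹ := by rw [h]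
      _ = u⁻¹ * v * u⁻¹⁻¹ := by group
  rw [← conj_pow, hconj, conj_pow, inv_inv]

section CubicRelation

variable {R A : Type*} [CommRing R] [Ring A] [Algebra R A] {α β : R} {u v : A}

theorem mul_cubic_inv (hu : u ^ 3 = α • u ^ 2 + β • u + 1) :
    u * (u ^ 2 - α • u - β • 1) = 1 := by
  rw [mul_sub, mul_sub, mul_smul_comm, mul_smul_comm, mul_one, ← pow_succ', ← pow_two, hu]
  abel

theorem cubic_inv_mul (hu : u ^ 3 = α • u ^ 2 + β • u + 1) :
    (u ^ 2 - α • u - β • 1) * u = 1 := by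
  rw [sub_mul, sub_mul, smul_mul_assoc, smul_mul_assoc, one_mul, ← pow_succ, ← pow_two, hu]
  abel

@[simps]
def unitOfCubic (hu : u ^ 3 = α • u ^ 2 + β • u + 1) : Aˣ :=
  ⟨u, u ^ 2 - α • u - β • 1, mul_cubic_inv hu, cubic_inv_mul hu⟩

theorem conj_sq_eq_of_cubic_of_braid (hu : u ^ 3 = α • u ^ 2 + β • u + 1)
    (hv : v ^ 3 = α • v ^ 2 + β • v + 1) (h : u * v * u = v * u * v) :
    v * u ^ 2 * (v ^ 2 - α • v - β • 1) = (u ^ 2 - α • u - β • 1) * v ^ 2 * u := by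
  have hunits : unitOfCubic hu * unitOfCubic hv * unitOfCubic hu
      = unitOfCubic hv * unitOfCubic hu * unitOfCubic hv := Units.ext h
  simpa using congrArg Units.val (conj_sq_eq_of_braid hunits)

theorem cubic_braid_identity (hu : u ^ 3 = α • u ^ 2 + β • u + 1)
    (hv : v ^ 3 = α • v ^ 2 + β • v + 1) (h : u * v * u = v * u * v) :
    v * u ^ 2 * v ^ 2 = u ^ 2 * v ^ 2 * u + α • (v * u ^ 2 * v - u * v ^ 2 * u)
      + β • (v * u ^ 2 - v ^ 2 * u) := by
  have hconj := conj_sq_eq_of_cubic_of_braid hu hv h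
  have hsq : v ^ 2 = (v ^ 2 - α • v - β • 1) + α • v + β • 1 := by abel
  calc v * u ^ 2 * v ^ 2
      = v * u ^ 2 * (v ^ 2 - α • v - β • 1) + α • (v * u ^ 2 * v) + β • (v * u ^ 2) := by
        conv_lhs => rw [hsq]
        rw [mul_add, mul_add, mul_smul_comm, mul_smul_comm, mul_one]
    _ = _ := by
        rw [hconj, sub_mul, sub_mul, sub_mul, sub_mul, smul_mul_assoc, smul_mul_assoc,
          smul_mul_assoc, smul_mul_assoc, one_mul, smul_sub, smul_sub]
        abel

end CubicRelation

theorem braidGen_braid (n : ℕ) (i j : Fin (n - 1)) (hij : (j : ℕ) = (i : ℕ) + 1) :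
    braidGen n i * braidGen n j * braidGen n i = braidGen n j * braidGen n i * braidGen n j := by
  have hrel := braid_mk_eq_one (m := n - 1) (Or.inr ⟨i, j, hij, rfl⟩)
  simp only [map_mul, map_inv] at hrel
  exact mul_inv_eq_one.mp hrel

theorem hb_cubic (α β : R) (n : ℕ) (i : Fin (n - 1)) :
    hb R α β n i ^ 3 = α • hb R α β n i ^ 2 + β • hb R α β n i + 1 := by
  simpa only [map_add, map_smul, map_pow, map_one, hb] using
    RingQuot.mkAlgHom_rel R (cubicRel.cube (α := α) (β := β) i)

theorem hb_braid (α β : R) (n : ℕ) (i j : Fin (n - 1)) (hij : (j : ℕ) = (i : ℕ) + 1) :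
    hb R α β n i * hb R α β n j * hb R α β n i
      = hb R α β n j * hb R α β n i * hb R α β n j := by
  simp only [hb, gb, ← map_mul, braidGen_braid n i j hij]

/-- In the cubic Hecke algebra `H(Q_{α,β},n)` one has
`b_{j+1} b_j² b_{j+1}² = b_j² b_{j+1}² b_j + α(b_{j+1} b_j² b_{j+1} − b_j b_{j+1}² b_j)
 + β(b_{j+1} b_j² − b_{j+1}² b_j)`. -/
theorem statement_3 (R : Type) [CommRing R] (α β : R) (n : ℕ)
    (j : Fin (n - 1)) (h : (j : ℕ) + 1 < n - 1) :
    hb R α β n ⟨(j : ℕ) + 1, h⟩ * hb R α β n j ^ 2 * hb R α β n ⟨(j : ℕ) + 1, h⟩ ^ 2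
      = hb R α β n j ^ 2 * hb R α β n ⟨(j : ℕ) + 1, h⟩ ^ 2 * hb R α β n j
        + α • (hb R α β n ⟨(j : ℕ) + 1, h⟩ * hb R α β n j ^ 2 * hb R α β n ⟨(j : ℕ) + 1, h⟩
            - hb R α β n j * hb R α β n ⟨(j : ℕ) + 1, h⟩ ^ 2 * hb R α β n j)
        + β • (hb R α β n ⟨(j : ℕ) + 1, h⟩ * hb R α β n j ^ 2
            - hb R α β n ⟨(j : ℕ) + 1, h⟩ ^ 2 * hb R α β n j) :=
  cubic_braid_identity (hb_cubic R α β n j) (hb_cubic R α β n _) (hb_braid R α β n j _ rfl)
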